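/- Let β > 0 and let K ⊆ V be the union of all minimal strongly connected components C with ρ(A_C) = e^β. If h : V → ℝ has nonnegative entries and satisfies A·h = e^β·h, then the restriction h|_K satisfies A_K·(h|_K) = e^β·(h|_K). -/

import Mathlib

open Filter Topology ENNReal

noncomputable section

/-- Every subset of a finite type is a `Fintype` (classically). -/
noncomputable def setFintypeAux {V : Type*} [Fintype V] (S : Set V) : Fintype S :=
  S.toFinite.fintype

attribute [local instance] setFintypeAux

variable {V : Type*} [Fintype V] [DecidableEq V]

/-- `v ⟶* w` : some power of `A` has a positive `(v,w)` entry. -/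
def Reaches (A : Matrix V V ℝ) (v w : V) : Prop := ∃ k : ℕ, 0 < (A ^ k) v w

/-- The spectral radius of a real matrix: the largest absolute value of a complex
eigenvalue. -/
def specRad (A : Matrix V V ℝ) : ℝ :=
  sSup {r : ℝ | ∃ μ ∈ spectrum ℂ (A.map fun t : ℝ => (t : ℂ)), r = ‖μ‖}

/-- The `S × S` submatrix of `A`. -/
def subMat (A : Matrix V V ℝ) (S : Set V) : Matrix S S ℝ :=
  A.submatrix Subtype.val Subtype.val

/-- `ρ(A_S)`. -/
def specRadSub (A : Matrix V V ℝ) (S : Set V) : ℝ := specRad (subMat A S)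

/-- The strongly connected component of `v`. -/
def sccOf (A : Matrix V V ℝ) (v : V) : Set V := {u | Reaches A v u ∧ Reaches A u v}

/-- `C` is a strongly connected component. -/
def IsSCC (A : Matrix V V ℝ) (C : Set V) : Prop := ∃ v : V, C = sccOf A v

/-- `C` is a minimal strongly connected component: every other component `C'` that reaches `C`
has strictly smaller spectral radius. -/
def IsMinSCC (A : Matrix V V ℝ) (C : Set V) : Prop :=
  IsSCC A C ∧ ∀ C' : Set V, IsSCC A C' → C' ≠ C →
    (∃ v' ∈ C', ∃ u ∈ C, Reaches A v' u) → specRadSub A C' < specRadSub A C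

/-- `Z_{w,v}(x) := Σ_{k=0}^∞ x^k (A^k)_{w,v} ∈ [0,∞]`. -/
def Zfun (A : Matrix V V ℝ) (w v : V) (x : ℝ) : ℝ≥0∞ :=
  ∑' k : ℕ, ENNReal.ofReal (x ^ k * (A ^ k) w v)

/-- `Z_v(x) := Σ_{w ∈ V} Z_{w,v}(x)`. -/
def Zvert (A : Matrix V V ℝ) (v : V) (x : ℝ) : ℝ≥0∞ := ∑ w : V, Zfun A w v x


/-! If `x ∈ K` lies in the component `C` and an edge `x → z` leaves `K` with `h z > 0`, then
`h|_C` is positive (zeros of `h` propagate backwards along edges), satisfies `A_C h ≤ e^β h`,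
and the inequality is strict at `x`. For an eigenvector `y` of `A_C` with eigenvalue `μ`, compare
`|y|` with `t h`, `t = max |y| / h`: if `|μ| ≥ e^β`, the set where `|y| = t h` is closed under
edges, hence contains `x`, where the strict inequality fails. So `ρ(A_C) < e^β`, contradicting
`C ⊆ K`. Thus `A_{x,z} h_z = 0` for all `x ∈ K`, `z ∉ K`, and `A_K h|_K = (A h)|_K`. -/

open Matrix

section

variable {n : Type*} [Fintype n] {B : Matrix n n ℝ}

theorem Matrix.mulVec_apply_le_mulVec_apply (hB : ∀ i j, 0 ≤ B i j) {f g : n → ℝ}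
    (hfg : ∀ j, f j ≤ g j) (x : n) : (B *ᵥ f) x ≤ (B *ᵥ g) x :=
  Finset.sum_le_sum fun j _ => mul_le_mul_of_nonneg_left (hfg j) (hB x j)

theorem Matrix.eq_of_mulVec_apply_eq (hB : ∀ i j, 0 ≤ B i j) {f g : n → ℝ}
    (hfg : ∀ j, f j ≤ g j) {x y : n} (hx : (B *ᵥ f) x = (B *ᵥ g) x) (hxy : 0 < B x y) :
    f y = g y := by
  have hsum : ∑ j, B x j * (g j - f j) = 0 := by
    simp only [mul_sub, Finset.sum_sub_distrib]
    exact sub_eq_zero.2 hx.symm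
  rw [Finset.sum_eq_zero_iff_of_nonneg fun j _ => mul_nonneg (hB x j) (sub_nonneg.2 (hfg j))]
    at hsum
  have := (mul_eq_zero.1 (hsum y (Finset.mem_univ y))).resolve_left hxy.ne'
  linarith

theorem Matrix.norm_mul_le_mulVec_norm (hB : ∀ i j, 0 ≤ B i j) {μ : ℂ} {y : n → ℂ}
    (hy : B.map (↑) *ᵥ y = μ • y) (x : n) :
    ‖μ‖ * ‖y x‖ ≤ (B *ᵥ fun j => ‖y j‖) x := by
  calc ‖μ‖ * ‖y x‖ = ‖∑ j, (B x j : ℂ) * y j‖ := by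
        rw [← norm_mul, ← smul_eq_mul, ← Pi.smul_apply, ← hy]; rfl
    _ ≤ ∑ j, ‖(B x j : ℂ) * y j‖ := norm_sum_le _ _
    _ = (B *ᵥ fun j => ‖y j‖) x := by
        simp only [norm_mul, Complex.norm_real, Real.norm_of_nonneg (hB _ _)]; rfl

theorem subMat_mulVec_add_sum_compl (A : Matrix n n ℝ) (S : Set n) (h : n → ℝ) (x : S) :
    (subMat A S *ᵥ fun u : S => h u) x + ∑ z : ↥Sᶜ, A x z * h z = (A *ᵥ h) x := by
  classical
  change ∑ z : S, A x z * h z + _ = ∑ z, A x z * h z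
  convert Fintype.sum_subtype_add_sum_subtype (· ∈ S) fun z => A x z * h z

variable [DecidableEq n]

theorem Matrix.pow_succ_apply_pos_iff (hB : ∀ i j, 0 ≤ B i j) {k : ℕ} {x y : n} :
    0 < (B ^ (k + 1)) x y ↔ ∃ z, 0 < B x z ∧ 0 < (B ^ k) z y := by
  rw [pow_succ', mul_apply, Finset.sum_pos_iff_of_nonneg
    fun z _ => mul_nonneg (hB x z) (pow_apply_nonneg hB k z y)]
  simp only [Finset.mem_univ, true_and]
  exact exists_congr fun z => ⟨fun h => ⟨pos_of_mul_pos_left h (pow_apply_nonneg hB k z y),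
    pos_of_mul_pos_right h (hB x z)⟩, fun h => mul_pos h.1 h.2⟩

theorem Matrix.mem_of_pow_apply_pos (hB : ∀ i j, 0 ≤ B i j) {S : Set n}
    (hS : ∀ x ∈ S, ∀ y, 0 < B x y → y ∈ S) {k : ℕ} {x y : n} (hx : x ∈ S)
    (hxy : 0 < (B ^ k) x y) : y ∈ S := by
  induction k generalizing x with
  | zero =>
    rcases eq_or_ne x y with rfl | hne
    · exact hx
    · simp [one_apply_ne hne] at hxy
  | succ k ih =>
    obtain ⟨z, hxz, hzy⟩ := (pow_succ_apply_pos_iff hB).1 hxy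
    exact ih (hS x hx z hxz) hzy

theorem Matrix.exists_mulVec_eq_smul_of_mem_spectrum {M : Matrix n n ℂ} {μ : ℂ}
    (hμ : μ ∈ spectrum ℂ M) : ∃ y : n → ℂ, y ≠ 0 ∧ M *ᵥ y = μ • y := by
  rw [← spectrum_toLin', ← Module.End.hasEigenvalue_iff_mem_spectrum] at hμ
  obtain ⟨y, hy⟩ := hμ.exists_hasEigenvector
  exact ⟨y, hy.2, by simpa using hy.apply_eq_smul⟩

theorem Reaches.of_pos {x y : n} (h : 0 < B x y) : Reaches B x y := ⟨1, by rwa [pow_one]⟩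

theorem Reaches.trans (hB : ∀ i j, 0 ≤ B i j) {x y z : n} (hxy : Reaches B x y)
    (hyz : Reaches B y z) : Reaches B x z := by
  obtain ⟨k, hk⟩ := hxy
  obtain ⟨l, hl⟩ := hyz
  refine ⟨k + l, (mul_pos hk hl).trans_le ?_⟩
  rw [pow_add, mul_apply]
  exact Finset.single_le_sum (f := fun j => (B ^ k) x j * (B ^ l) j z)
    (fun j _ => mul_nonneg (pow_apply_nonneg hB k x j) (pow_apply_nonneg hB l j z))
    (Finset.mem_univ y)

theorem pos_of_reaches_of_mulVec_eq_smul (hB : ∀ i j, 0 ≤ B i j) {h : n → ℝ}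
    (hpos : ∀ x, 0 ≤ h x) {r : ℝ} (hh : B *ᵥ h = r • h) {x y : n} (hxy : Reaches B x y)
    (hy : 0 < h y) : 0 < h x := by
  by_contra! hx
  have hclosed : ∀ x ∈ {x | h x = 0}, ∀ y, 0 < B x y → y ∈ {x | h x = 0} := by
    intro x hx y hxy
    refine (eq_of_mulVec_apply_eq hB (f := 0) hpos ?_ hxy).symm
    rw [mulVec_zero, hh, Pi.smul_apply, show h x = 0 from hx, smul_zero, Pi.zero_apply]
  obtain ⟨k, hk⟩ := hxy
  exact hy.ne' (mem_of_pow_apply_pos hB hclosed (le_antisymm hx (hpos x)) hk)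

theorem Matrix.norm_lt_of_mulVec_le (hB : ∀ i j, 0 ≤ B i j) {g : n → ℝ} (hg : ∀ x, 0 < g x)
    {r : ℝ} (hle : ∀ x, (B *ᵥ g) x ≤ r * g x) {u : n} (hlt : (B *ᵥ g) u < r * g u)
    (hreach : ∀ x, Reaches B x u) {μ : ℂ} (hμ : μ ∈ spectrum ℂ (B.map ((↑) : ℝ → ℂ))) :
    ‖μ‖ < r := by
  obtain ⟨y, hy0, hy⟩ := exists_mulVec_eq_smul_of_mem_spectrum hμ
  set z : n → ℝ := fun j => ‖y j‖
  obtain ⟨x₀, -, hx₀⟩ := Finset.exists_max_image Finset.univ (fun x => z x / g x)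
    ⟨u, Finset.mem_univ u⟩
  set t := z x₀ / g x₀
  have hzt : ∀ x, z x ≤ t * g x := fun x => (div_le_iff₀ (hg x)).1 (hx₀ x (Finset.mem_univ x))
  have ht : 0 < t := by
    obtain ⟨x₁, hx₁⟩ := Function.ne_iff.1 hy0
    exact (div_pos (norm_pos_iff.2 hx₁) (hg x₁)).trans_le (hx₀ x₁ (Finset.mem_univ x₁))
  have hBtg : ∀ x, (B *ᵥ fun j => t * g j) x = t * (B *ᵥ g) x := fun x => by
    simp only [mulVec, dotProduct, Finset.mul_sum, mul_left_comm t]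
  by_contra! hge
  -- On `D`, `t r g ≤ |μ| z ≤ B z ≤ t B g ≤ t r g`, so all of these are equalities.
  set D := {x | z x = t * g x}
  have hD : ∀ x ∈ D, (B *ᵥ g) x = r * g x ∧ ∀ y, 0 < B x y → y ∈ D := by
    intro x hx
    have hup : (B *ᵥ z) x ≤ t * (B *ᵥ g) x :=
      (hBtg x) ▸ mulVec_apply_le_mulVec_apply hB hzt x
    have hlow : t * (r * g x) ≤ (B *ᵥ z) x := calc
      t * (r * g x) = r * z x := by rw [hx]; ring
      _ ≤ ‖μ‖ * z x := mul_le_mul_of_nonneg_right hge (norm_nonneg _)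
      _ ≤ (B *ᵥ z) x := norm_mul_le_mulVec_norm hB hy x
    have hBg : (B *ᵥ g) x = r * g x :=
      le_antisymm (hle x) (le_of_mul_le_mul_left (hlow.trans hup) ht)
    refine ⟨hBg, fun y hxy => eq_of_mulVec_apply_eq hB hzt ?_ hxy⟩
    rw [hBtg]
    nlinarith [mul_le_mul_of_nonneg_left (hle x) ht.le]
  have hx₀D : x₀ ∈ D := (div_mul_cancel₀ (z x₀) (hg x₀).ne').symm
  obtain ⟨k, hk⟩ := hreach x₀
  exact hlt.ne (hD u (mem_of_pow_apply_pos hB (fun x hx => (hD x hx).2) hx₀D hk)).1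

theorem specRad_lt_of_forall_norm_lt {r : ℝ} (hr : 0 < r)
    (h : ∀ μ ∈ spectrum ℂ (B.map fun t : ℝ => (t : ℂ)), ‖μ‖ < r) : specRad B < r := by
  set S := {s : ℝ | ∃ μ ∈ spectrum ℂ (B.map fun t : ℝ => (t : ℂ)), s = ‖μ‖}
  have hS : S.Finite := ((finite_spectrum _).image (‖·‖)).subset fun _ ⟨μ, hμ, hμs⟩ =>
    ⟨μ, hμ, hμs.symm⟩
  change sSup S < r
  rcases S.eq_empty_or_nonempty with hSe | hSne
  · rw [hSe, Real.sSup_empty]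
    exact hr
  · obtain ⟨μ, hμ, hμs⟩ := hSne.csSup_mem hS
    rw [hμs]
    exact h μ hμ

variable {A : Matrix n n ℝ}

theorem Reaches.subMat_sccOf (hA : ∀ i j, 0 ≤ A i j) {v x y : n} (hx : x ∈ sccOf A v)
    (hy : y ∈ sccOf A v) (hxy : Reaches A x y) :
    Reaches (subMat A (sccOf A v)) ⟨x, hx⟩ ⟨y, hy⟩ := by
  obtain ⟨k, hk⟩ := hxy
  refine ⟨k, ?_⟩
  induction k generalizing x with
  | zero =>
    obtain rfl : x = y := by
      by_contra hne
      simp [one_apply_ne hne] at hk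
    simp
  | succ k ih =>
    obtain ⟨z, hxz, hzy⟩ := (pow_succ_apply_pos_iff hA).1 hk
    have hz : z ∈ sccOf A v :=
      ⟨hx.1.trans hA (.of_pos hxz), Reaches.trans hA ⟨k, hzy⟩ hy.2⟩
    exact (pow_succ_apply_pos_iff (B := subMat A (sccOf A v)) fun i j => hA i j).2
      ⟨⟨z, hz⟩, hxz, ih hz hzy⟩

theorem specRadSub_sccOf_lt (hA : ∀ i j, 0 ≤ A i j) {r : ℝ} {h : n → ℝ}
    (hpos : ∀ x, 0 ≤ h x) (hh : A *ᵥ h = r • h) {v u w : n} (hu : u ∈ sccOf A v)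
    (hw : w ∉ sccOf A v) (huw : 0 < A u w) (hhw : 0 < h w) :
    specRadSub A (sccOf A v) < r := by
  set C := sccOf A v
  have hAh : ∀ x, (A *ᵥ h) x = r * h x := fun x => congrFun hh x
  have hhu : 0 < h u := pos_of_reaches_of_mulVec_eq_smul hA hpos hh (.of_pos huw) hhw
  have hreach : ∀ x : C, Reaches A x u := fun x => x.2.2.trans hA hu.1
  have hr : 0 < r := by
    refine pos_of_mul_pos_left ((mul_pos huw hhw).trans_le ?_) hhu.le
    rw [← hAh]
    exact Finset.single_le_sum (f := fun z => A u z * h z)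
      (fun z _ => mul_nonneg (hA u z) (hpos z)) (Finset.mem_univ w)
  have hle : ∀ x : C, (subMat A C *ᵥ fun y : C => h y) x ≤ r * h x := fun x => by
    have hout : 0 ≤ ∑ z : ↥Cᶜ, A x z * h z :=
      Finset.sum_nonneg fun z _ => mul_nonneg (hA x z) (hpos z)
    linarith [hAh x, subMat_mulVec_add_sum_compl A C h x]
  have hlt : (subMat A C *ᵥ fun y : C => h y) ⟨u, hu⟩ < r * h u := by
    have hleak : A u w * h w ≤ ∑ z : ↥Cᶜ, A u z * h z :=
      Finset.single_le_sum (f := fun z : ↥Cᶜ => A u z * h z)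
        (fun z _ => mul_nonneg (hA _ _) (hpos _)) (Finset.mem_univ ⟨w, hw⟩)
    linarith [hAh u, subMat_mulVec_add_sum_compl A C h ⟨u, hu⟩, mul_pos huw hhw]
  exact specRad_lt_of_forall_norm_lt hr fun μ hμ =>
    norm_lt_of_mulVec_le (B := subMat A C) (fun i j => hA i j)
      (fun x : C => pos_of_reaches_of_mulVec_eq_smul hA hpos hh (hreach x) hhu) hle hlt
      (fun x : C => (hreach x).subMat_sccOf hA x.2 hu) hμ

end

theorem stmt14_general {V : Type*} [Fintype V] [DecidableEq V]
    (A : Matrix V V ℝ) (hA : ∀ i j, 0 ≤ A i j)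
    (β : ℝ)
    (K : Set V)
    (hK : K = {u : V | ∃ C : Set V, IsMinSCC A C ∧ specRadSub A C = Real.exp β ∧ u ∈ C})
    (h : V → ℝ) (hpos : ∀ u, 0 ≤ h u) (hharm : A.mulVec h = Real.exp β • h) :
    (subMat A K).mulVec (fun u : K => h u.val) = Real.exp β • fun u : K => h u.val := by
  have hvanish : ∀ (x : K) (z : ↥Kᶜ), A x z * h z = 0 := by
    intro x z
    obtain ⟨C, hC, hρ, hxC⟩ := hK.le x.2
    obtain ⟨v, rfl⟩ := hC.1
    by_contra hne
    obtain ⟨hxz, hz⟩ := mul_ne_zero_iff.1 hne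
    have hzC : (z : V) ∉ sccOf A v := fun hzC => z.2 (hK.ge ⟨_, hC, hρ, hzC⟩)
    exact (specRadSub_sccOf_lt hA hpos hharm hxC hzC ((hA _ _).lt_of_ne' hxz)
      ((hpos _).lt_of_ne' hz)).ne hρ
  funext x
  have hx : (A *ᵥ h) x = Real.exp β * h x := congrFun hharm x
  rw [Pi.smul_apply, smul_eq_mul, ← hx, ← subMat_mulVec_add_sum_compl,
    Finset.sum_eq_zero fun z _ => hvanish x z, add_zero]

/-- `K` is the union of all minimal strongly connected components `C` with
`ρ(A_C) = e^β`; if `h ≥ 0` and `A h = e^β h`, then `A_K (h|_K) = e^β (h|_K)`. -/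
theorem stmt14 {V : Type*} [Fintype V] [DecidableEq V] [Nonempty V]
    (A : Matrix V V ℝ) (hA : ∀ i j, 0 ≤ A i j)
    (β : ℝ) (hβ : 0 < β)
    (K : Set V)
    (hK : K = {u : V | ∃ C : Set V, IsMinSCC A C ∧ specRadSub A C = Real.exp β ∧ u ∈ C})
    (h : V → ℝ) (hpos : ∀ u, 0 ≤ h u) (hharm : A.mulVec h = Real.exp β • h) :
    (subMat A K).mulVec (fun u : K => h u.val) = Real.exp β • fun u : K => h u.val :=
  stmt14_general A hA β K hK h hpos hharm
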